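/- Let A, P be real d×n matrices with σ = ‖A−P‖/√n, M a real d×k matrix, k ≥ 2, α ∈ (0,1), δ ∈ (0,1/k] with δn a positive integer, and 0 ≤ r ≤ k−1. Assume every column of P lies in the convex hull of the columns of M, Well-Separatedness with parameter α, Spectrally Bounded Perturbations, and Proximate Latent Points. Suppose R_1,…,R_r ⊆ {1,…,n} each have cardinality δn and distinct ℓ_1,…,ℓ_r ∈ [k] satisfy |A_{R_t} − M_{ℓ_t}| ≤ 150·k⁴·σ/(α√δ) for all t. Let u ∈ ℝ^d be a unit vector with u·A_{R_t} = 0 for t = 1,…,r that satisfies: (i) for all distinct ℓ, ℓ′ ∉ {ℓ_1,…,ℓ_r}, |u·(M_ℓ − M_{ℓ′})| ≥ (0.097·α/k⁴)·max_{ℓ''}|M_{ℓ''}|, and (ii) for all ℓ ∉ {ℓ_1,…,ℓ_r}, |u·M_ℓ| ≥ (0.09989·α/k⁴)·max_{ℓ''}|M_{ℓ''}|. Let R_{r+1} ⊆ {1,…,n} with |R_{r+1}| = δn maximize |u·A_T| over all subsets T of cardinality δn. Then there exists ℓ ∉ {ℓ_1,…,ℓ_r} such that |A_{R_{r+1}}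 − M_ℓ| ≤ 150·k⁴·σ/(α√δ). -/

import Mathlib

/-!
Averaging over `δn` columns divides the noise by `√(δn)`:
`‖A_S - P_S‖ ≤ ‖A - P‖ / √(δn) = σ / √δ =: β`.
Write `P_{R'} = ∑ w_ℓ M_ℓ` as a convex combination and let `ℓ₀` be the unused index maximising
`|u · M_ℓ|`. Comparing `R'` with the proximate set of `ℓ₀` gives
`|∑ w_ℓ (u · M_ℓ)| ≥ |u · M_ℓ₀| - 6β`. The values `u · M_ℓ` are small on the used indices
(there `u · A_{R_t} = 0`) and pairwise far apart on the unused ones, so the average can only come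
that close to the extreme value if all but `O(k⁴β / (α max |M|))` of the weight sits on the
single unused index `ℓ` maximising `±u · M_ℓ`; then `|A_{R'} - M_ℓ| ≤ β + 2 (1 - w_ℓ) max |M|`.
-/

open Matrix

noncomputable def col {d k : ℕ} (M : Matrix (Fin d) (Fin k) ℝ) (ℓ : Fin k) :
    EuclideanSpace ℝ (Fin d) := WithLp.toLp 2 (fun i => M i ℓ)

noncomputable def specNorm {d n : ℕ} (B : Matrix (Fin d) (Fin n) ℝ) : ℝ :=
  ‖LinearMap.toContinuousLinearMap (Matrix.toEuclideanLin B)‖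

noncomputable def colAvg {d n : ℕ} (A : Matrix (Fin d) (Fin n) ℝ) (S : Finset (Fin n)) :
    EuclideanSpace ℝ (Fin d) :=
  (S.card : ℝ)⁻¹ • ∑ j ∈ S, _root_.col A j

/-- Norm of the component of `x` orthogonal to the span of the columns `M ℓ'`, `ℓ' ≠ ℓ`. -/
noncomputable def projNullNorm {d k : ℕ} (M : Matrix (Fin d) (Fin k) ℝ) (ℓ : Fin k)
    (x : EuclideanSpace ℝ (Fin d)) : ℝ :=
  ‖(Submodule.orthogonalProjection ((Submodule.span ℝ {y | ∃ ℓ' : Fin k, ℓ' ≠ ℓ ∧ y = _root_.col M ℓ'})ᗮ) x :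
      EuclideanSpace ℝ (Fin d))‖

lemma col_sub {d n : ℕ} (A B : Matrix (Fin d) (Fin n) ℝ) (j : Fin n) :
    _root_.col (A - B) j = _root_.col A j - _root_.col B j := rfl

lemma colAvg_sub {d n : ℕ} (A B : Matrix (Fin d) (Fin n) ℝ) (S : Finset (Fin n)) :
    colAvg (A - B) S = colAvg A S - colAvg B S := by
  simp only [colAvg, col_sub, Finset.sum_sub_distrib, smul_sub]

lemma norm_sum_col_le_specNorm_mul_sqrt_card {d n : ℕ} (B : Matrix (Fin d) (Fin n) ℝ)
    (S : Finset (Fin n)) :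
    ‖∑ j ∈ S, _root_.col B j‖ ≤ specNorm B * √S.card := by
  set v : EuclideanSpace ℝ (Fin n) := ∑ j ∈ S, EuclideanSpace.single j 1
  have hv : toEuclideanLin B v = ∑ j ∈ S, _root_.col B j := by
    simp only [v, map_sum]
    refine Finset.sum_congr rfl fun j _ => ?_
    ext i
    simp [_root_.col, Matrix.toEuclideanLin]
  have hnorm : ‖v‖ = √S.card := by
    rw [EuclideanSpace.norm_eq]
    congr 1
    simp [v, Finset.sum_apply, Pi.single_apply]
  calc ‖∑ j ∈ S, _root_.col B j‖ = ‖LinearMap.toContinuousLinearMap (toEuclideanLin B) v‖ := by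
        rw [← hv]; rfl
    _ ≤ specNorm B * √S.card := hnorm ▸ ContinuousLinearMap.le_opNorm _ v

lemma norm_colAvg_le_specNorm_div_sqrt_card {d n : ℕ} (B : Matrix (Fin d) (Fin n) ℝ)
    (S : Finset (Fin n)) :
    ‖colAvg B S‖ ≤ specNorm B / √S.card := by
  rw [colAvg, norm_smul, norm_inv, Real.norm_natCast]
  calc _ ≤ (S.card : ℝ)⁻¹ * (specNorm B * √S.card) := by
        gcongr; exact norm_sum_col_le_specNorm_mul_sqrt_card B S
    _ = specNorm B / √S.card := by
      rcases S.eq_empty_or_nonempty with rfl | hS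
      · simp
      · have : (0 : ℝ) < S.card := by exact_mod_cast hS.card_pos
        field_simp
        rw [Real.sq_sqrt this.le, mul_comm]

lemma Convex.colAvg_mem {d n : ℕ} {P : Matrix (Fin d) (Fin n) ℝ} {S : Finset (Fin n)}
    {s : Set (EuclideanSpace ℝ (Fin d))} (hs : Convex ℝ s) (hS : S.Nonempty)
    (hP : ∀ j ∈ S, _root_.col P j ∈ s) : colAvg P S ∈ s := by
  rw [colAvg, Finset.smul_sum]
  refine hs.sum_mem (fun _ _ => by positivity) ?_ hP
  rw [Finset.sum_const, nsmul_eq_mul, mul_inv_cancel₀ (by exact_mod_cast hS.card_pos.ne')]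

lemma norm_colAvg_sub_colAvg_le {d n : ℕ} (A P : Matrix (Fin d) (Fin n) ℝ) {S : Finset (Fin n)}
    {δ : ℝ} (hδ : 0 ≤ δ) (hS : (S.card : ℝ) = δ * n) :
    ‖colAvg A S - colAvg P S‖ ≤ specNorm (A - P) / √n / √δ := by
  rw [← colAvg_sub, div_div, ← Real.sqrt_mul' _ hδ, mul_comm (n : ℝ), ← hS]
  exact norm_colAvg_le_specNorm_div_sqrt_card _ _

lemma norm_colAvg_sub_le {d n : ℕ} {P : Matrix (Fin d) (Fin n) ℝ} {S : Finset (Fin n)}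
    (hS : S.Nonempty) {y : EuclideanSpace ℝ (Fin d)} {ε : ℝ}
    (hP : ∀ j ∈ S, ‖_root_.col P j - y‖ ≤ ε) : ‖colAvg P S - y‖ ≤ ε := by
  simpa [dist_eq_norm] using
    (convex_closedBall y ε).colAvg_mem hS fun j hj => by simpa [dist_eq_norm] using hP j hj

lemma exists_weights_of_mem_convexHull_range {ι E : Type*} [Fintype ι] [AddCommGroup E]
    [Module ℝ E] {f : ι → E} {x : E} (hx : x ∈ convexHull ℝ (Set.range f)) :
    ∃ w ∈ stdSimplex ℝ ι, ∑ i, w i • f i = x := by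
  classical
  have hrange :
      Set.range f = Fintype.linearCombination ℝ f '' Set.range (fun i => Pi.single i 1) := by
    rw [← Set.range_comp]; congr 1; ext i; simp [Fintype.linearCombination_apply_single]
  rw [hrange, ← LinearMap.image_convexHull, convexHull_rangle_single_eq_stdSimplex] at hx
  obtain ⟨w, hw, rfl⟩ := hx
  exact ⟨w, hw, (Fintype.linearCombination_apply ℝ f w).symm⟩

lemma exists_forall_ne_apply_of_card_lt {α β : Type*} [Fintype α] [Fintype β] (f : α → β)
    (h : Fintype.card α < Fintype.card β) : ∃ b, ∀ a, b ≠ f a := by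
  by_contra! h'
  exact (Fintype.card_le_of_surjective f fun b => (h' b).imp fun _ => Eq.symm).not_gt h

lemma abs_inner_le_abs_inner_add_norm_sub {E : Type*} [NormedAddCommGroup E]
    [InnerProductSpace ℝ E] {u : E} (hu : ‖u‖ ≤ 1) (y z : E) :
    |inner ℝ u y| ≤ |inner ℝ u z| + ‖y - z‖ := by
  have h : |inner ℝ u (y - z)| ≤ ‖y - z‖ :=
    (abs_real_inner_le_norm u _).trans (mul_le_of_le_one_left (norm_nonneg _) hu)
  rw [inner_sub_right] at h
  linarith [abs_sub_abs_le_abs_sub (inner ℝ u y) (inner ℝ u z)]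

lemma abs_inner_le_abs_inner_colAvg_add {d n m : ℕ} {A P : Matrix (Fin d) (Fin n) ℝ} {β : ℝ}
    (hAP : ∀ S : Finset (Fin n), S.card = m → ‖colAvg A S - colAvg P S‖ ≤ β)
    {u : EuclideanSpace ℝ (Fin d)} (hu : ‖u‖ ≤ 1) {R' : Finset (Fin n)} (hR'card : R'.card = m)
    (hR'max : ∀ T : Finset (Fin n), T.card = m →
      |inner ℝ u (colAvg A T)| ≤ |inner ℝ u (colAvg A R')|)
    {S : Finset (Fin n)} (hS : S.card = m) {y : EuclideanSpace ℝ (Fin d)} {ε : ℝ}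
    (hSy : ‖colAvg P S - y‖ ≤ ε) :
    |inner ℝ u y| ≤ |inner ℝ u (colAvg P R')| + (2 * β + ε) := by
  have h1 := abs_inner_le_abs_inner_add_norm_sub hu y (colAvg A S)
  have h2 := abs_inner_le_abs_inner_add_norm_sub hu (colAvg A R') (colAvg P R')
  rw [norm_sub_rev] at h1
  linarith [norm_sub_le_norm_sub_add_norm_sub (colAvg A S) (colAvg P S) y,
    hAP S hS, hR'max S hS, hAP R' hR'card]

lemma norm_sum_smul_sub_le {ι E : Type*} [Fintype ι] [SeminormedAddCommGroup E]
    [NormedSpace ℝ E] {w : ι → ℝ} (hw0 : ∀ j, 0 ≤ w j) (hw1 : ∑ j, w j = 1) {f : ι → E}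
    {R : ℝ} (hf : ∀ j, ‖f j‖ ≤ R) (i : ι) : ‖∑ j, w j • f j - f i‖ ≤ (1 - w i) * (2 * R) := by
  classical
  calc ‖∑ j, w j • f j - f i‖ = ‖∑ j ∈ Finset.univ.erase i, w j • (f j - f i)‖ := by
        rw [Finset.sum_erase _ (by simp)]
        simp only [smul_sub, Finset.sum_sub_distrib, ← Finset.sum_smul, hw1, one_smul]
    _ ≤ ∑ j ∈ Finset.univ.erase i, w j * (2 * R) := by
        refine norm_sum_le_of_le _ fun j _ => ?_
        rw [norm_smul, Real.norm_of_nonneg (hw0 j)]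
        exact mul_le_mul_of_nonneg_left (by linarith [norm_sub_le (f j) (f i), hf j, hf i]) (hw0 j)
    _ = (1 - w i) * (2 * R) := by
        rw [← Finset.sum_mul, Finset.sum_erase_eq_sub (Finset.mem_univ i), hw1]

lemma sum_mul_le_sub_one_sub_mul {ι : Type*} [Fintype ι] {w x : ι → ℝ} (hw0 : ∀ j, 0 ≤ w j)
    (hw1 : ∑ j, w j = 1) {i : ι} {V g : ℝ} (hi : x i ≤ V) (hj : ∀ j ≠ i, x j ≤ V - g) :
    ∑ j, w j * x j ≤ V - (1 - w i) * g := by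
  classical
  calc ∑ j, w j * x j ≤ ∑ j, (w j * (V - g) + if j = i then w j * g else 0) := by
        gcongr with j
        split_ifs with h
        · subst h; nlinarith [hw0 j]
        · simpa using mul_le_mul_of_nonneg_left (hj j h) (hw0 j)
    _ = V - (1 - w i) * g := by
        rw [Finset.sum_add_distrib, ← Finset.sum_mul, hw1, Fintype.sum_ite_eq']
        ring

lemma exists_mem_one_sub_mul_min_le_of_le_sum {ι : Type*} [Fintype ι] {w x : ι → ℝ}
    (hw0 : ∀ i, 0 ≤ w i) (hw1 : ∑ i, w i = 1) {U : Finset ι} (hU : U.Nonempty) {a c V s : ℝ}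
    (hout : ∀ i ∉ U, x i ≤ c) (hgap : ∀ i ∈ U, ∀ j ∈ U, i ≠ j → a ≤ |x i - x j|)
    (hV : ∀ i ∈ U, x i ≤ V) (hsum : V - s ≤ ∑ i, w i * x i) :
    ∃ i ∈ U, (1 - w i) * min a (V - c) ≤ s := by
  obtain ⟨i, hiU, hmax⟩ := U.exists_max_image x hU
  refine ⟨i, hiU, ?_⟩
  have hj : ∀ j ≠ i, x j ≤ V - min a (V - c) := by
    intro j hji
    by_cases hjU : j ∈ U
    · have h := hgap j hjU i hiU hji
      rw [abs_of_nonpos (by linarith [hmax j hjU])] at h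
      linarith [min_le_left a (V - c), hV i hiU]
    · linarith [hout j hjU, min_le_right a (V - c)]
  linarith [sum_mul_le_sub_one_sub_mul hw0 hw1 (hV i hiU) hj]

lemma exists_mem_one_sub_mul_min_le_of_le_abs_sum {ι : Type*} [Fintype ι] {w x : ι → ℝ}
    (hw0 : ∀ i, 0 ≤ w i) (hw1 : ∑ i, w i = 1) {U : Finset ι} (hU : U.Nonempty) {a c V s : ℝ}
    (hout : ∀ i ∉ U, |x i| ≤ c) (hgap : ∀ i ∈ U, ∀ j ∈ U, i ≠ j → a ≤ |x i - x j|)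
    (hV : ∀ i ∈ U, |x i| ≤ V) (hsum : V - s ≤ |∑ i, w i * x i|) :
    ∃ i ∈ U, (1 - w i) * min a (V - c) ≤ s := by
  rcases abs_cases (∑ i, w i * x i) with ⟨h, -⟩ | ⟨h, -⟩
  · exact exists_mem_one_sub_mul_min_le_of_le_sum hw0 hw1 hU
      (fun i hi => (le_abs_self _).trans (hout i hi)) hgap
      (fun i hi => (le_abs_self _).trans (hV i hi)) (h ▸ hsum)
  · refine exists_mem_one_sub_mul_min_le_of_le_sum (x := fun i => -x i) hw0 hw1 hU
      (fun i hi => (neg_le_abs _).trans (hout i hi)) (fun i hi j hj hij => ?_)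
      (fun i hi => (neg_le_abs _).trans (hV i hi)) ?_
    · rw [neg_sub_neg, abs_sub_comm]; exact hgap i hi j hj hij
    · simpa [h] using hsum

-- The constants fit because `0.09989 - 1/60 > 0.0832` and `2 * 6 / 0.0832 + 1/16 < 150`.
lemma add_mul_le_of_mul_min_le {K α β Mmax V ω : ℝ} (hK : 2 ≤ K) (hα0 : 0 < α) (hα1 : α < 1)
    (hβ : 0 ≤ β) (hSB : β ≤ α ^ 3 * Mmax / (4500 * K ^ 9)) (hV : 0.09989 * α / K ^ 4 * Mmax ≤ V)
    (hω : ω * min (0.097 * α / K ^ 4 * Mmax) (V - 150 * K ^ 4 * β / α) ≤ 6 * β) :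
    β + ω * (2 * Mmax) ≤ 150 * K ^ 4 * β / α := by
  have hK4 : 16 ≤ K ^ 4 := by nlinarith [pow_le_pow_left₀ (by norm_num) hK 4]
  have hK0 : 0 < K := by linarith
  have hSB' : β * (4500 * K ^ 9) ≤ α ^ 3 * Mmax := (le_div_iff₀ (by positivity)).1 hSB
  have hMmax : 0 ≤ Mmax := by
    by_contra! h
    nlinarith [mul_neg_of_pos_of_neg (pow_pos hα0 3) h,
      mul_nonneg hβ (by positivity : (0 : ℝ) ≤ 4500 * K ^ 9)]
  set Q := α / K ^ 4 * Mmax with hQ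
  have hQ0 : 0 ≤ Q := by positivity
  have hQK : Q * K ^ 4 = α * Mmax := by rw [hQ]; field_simp
  set c := 150 * K ^ 4 * β / α with hc
  have hcα : c * α = 150 * K ^ 4 * β := by rw [hc]; field_simp
  have hβc : β ≤ c := by
    refine le_of_mul_le_mul_right ?_ hα0
    linarith [mul_le_of_le_one_right hβ hα1.le, mul_le_mul_of_nonneg_right hK4 hβ]
  have hcQ : c * 60 ≤ Q := by
    refine le_of_mul_le_mul_right ?_ (by positivity : 0 < α * K ^ 5)
    calc c * 60 * (α * K ^ 5) = 9000 * K ^ 9 * β := by linear_combination 60 * K ^ 5 * hcα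
      _ ≤ 2 * (α ^ 3 * Mmax) := by linarith
      _ ≤ α ^ 2 * Mmax * K := by
          nlinarith [mul_nonneg (mul_nonneg (sq_nonneg α) hMmax) (by linarith : 0 ≤ K - 2 * α)]
      _ = Q * (α * K ^ 5) := by linear_combination (-(α * K)) * hQK
  have hmin : 0.0832 * Q ≤ min (0.097 * α / K ^ 4 * Mmax) (V - c) := by
    have hVQ : 0.09989 * α / K ^ 4 * Mmax = 0.09989 * Q := by rw [hQ]; ring
    have h097 : 0.097 * α / K ^ 4 * Mmax = 0.097 * Q := by rw [hQ]; ring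
    exact le_min (by linarith) (by linarith)
  rcases le_or_gt ω 0 with hω0 | hω0
  · linarith [mul_nonpos_of_nonpos_of_nonneg hω0 hMmax]
  · have h := mul_le_mul_of_nonneg_right ((mul_le_mul_of_nonneg_left hmin hω0.le).trans hω)
      (by positivity : (0 : ℝ) ≤ K ^ 4)
    have hωQ : ω * (Q * K ^ 4) = ω * (α * Mmax) := by rw [hQK]
    refine le_of_mul_le_mul_right ?_ hα0
    rw [hcα]
    linarith [mul_le_of_le_one_left hβ hα1.le, mul_le_mul_of_nonneg_right hK4 hβ]

theorem stmt13_general {d n k r : ℕ} (hk : 2 ≤ k) (hrk : r ≤ k - 1)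
    (A P : Matrix (Fin d) (Fin n) ℝ) (M : Matrix (Fin d) (Fin k) ℝ)
    (σ : ℝ) (hσ : σ = specNorm (A - P) / Real.sqrt n)
    (α δ : ℝ) (hα : α ∈ Set.Ioo (0:ℝ) 1) (hδ0 : 0 < δ)
    (m : ℕ) (hm0 : 0 < m) (hm : (m : ℝ) = δ * n)
    (hPK : ∀ j : Fin n, _root_.col P j ∈ convexHull ℝ (Set.range (_root_.col M)))
    (hSB : σ / Real.sqrt δ ≤ α ^ 3 * (⨅ ℓ : Fin k, ‖_root_.col M ℓ‖) / (4500 * (k : ℝ) ^ 9))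
    (hProx : ∀ ℓ : Fin k, ∃ S : Finset (Fin n), S.card = m ∧
      ∀ j ∈ S, ‖_root_.col P j - _root_.col M ℓ‖ ≤ 4 * σ / Real.sqrt δ)
    (R : Fin r → Finset (Fin n))
    (ℓidx : Fin r → Fin k)
    (hclose : ∀ t, ‖colAvg A (R t) - _root_.col M (ℓidx t)‖
      ≤ 150 * (k : ℝ) ^ 4 * σ / (α * Real.sqrt δ))
    (u : EuclideanSpace ℝ (Fin d)) (hu : ‖u‖ = 1)
    (huR : ∀ t, (inner ℝ u (colAvg A (R t)) : ℝ) = 0)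
    (hui : ∀ ℓ ℓ' : Fin k, ℓ ≠ ℓ' → (∀ t, ℓ ≠ ℓidx t) → (∀ t, ℓ' ≠ ℓidx t) →
      (0.097 * α / (k : ℝ) ^ 4) * (⨆ ℓ'' : Fin k, ‖_root_.col M ℓ''‖)
        ≤ |(inner ℝ u (_root_.col M ℓ - _root_.col M ℓ') : ℝ)|)
    (huii : ∀ ℓ : Fin k, (∀ t, ℓ ≠ ℓidx t) →
      (0.09989 * α / (k : ℝ) ^ 4) * (⨆ ℓ'' : Fin k, ‖_root_.col M ℓ''‖)
        ≤ |(inner ℝ u (_root_.col M ℓ) : ℝ)|)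
    (R' : Finset (Fin n)) (hR'card : R'.card = m)
    (hR'max : ∀ T : Finset (Fin n), T.card = m →
      |(inner ℝ u (colAvg A T) : ℝ)| ≤ |(inner ℝ u (colAvg A R') : ℝ)|) :
    ∃ ℓ : Fin k, (∀ t, ℓ ≠ ℓidx t) ∧
      ‖colAvg A R' - _root_.col M ℓ‖ ≤ 150 * (k : ℝ) ^ 4 * σ / (α * Real.sqrt δ) := by
  obtain ⟨hα0, hα1⟩ := hα
  set β := σ / √δ with hβ
  have hβ0 : 0 ≤ β := by rw [hβ, hσ]; unfold specNorm; positivity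
  have hc : 150 * (k : ℝ) ^ 4 * σ / (α * √δ) = 150 * (k : ℝ) ^ 4 * β / α := by rw [hβ]; ring
  have hAP : ∀ S : Finset (Fin n), S.card = m → ‖colAvg A S - colAvg P S‖ ≤ β := fun S hS => by
    rw [hβ, hσ]; exact norm_colAvg_sub_colAvg_le A P hδ0.le (by rw [hS, hm])
  obtain ⟨w, ⟨hw0, hw1⟩, hwP⟩ := exists_weights_of_mem_convexHull_range <|
    (convex_convexHull ℝ _).colAvg_mem (Finset.card_pos.1 (hR'card ▸ hm0)) fun j _ => hPK j
  set U : Finset (Fin k) := Finset.univ.filter fun ℓ => ∀ t, ℓ ≠ ℓidx t with hU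
  have hUne : U.Nonempty := by
    obtain ⟨ℓ, hℓ⟩ :=
      exists_forall_ne_apply_of_card_lt ℓidx (by simp only [Fintype.card_fin]; omega)
    exact ⟨ℓ, by simpa [hU] using hℓ⟩
  set x : Fin k → ℝ := fun ℓ => inner ℝ u (_root_.col M ℓ) with hx
  set Mmax := ⨆ ℓ, ‖_root_.col M ℓ‖
  have hMle : ∀ ℓ, ‖_root_.col M ℓ‖ ≤ Mmax := le_ciSup (Set.finite_range _).bddAbove
  obtain ⟨ℓ0, hℓ0U, hℓ0max⟩ := U.exists_max_image (fun ℓ => |x ℓ|) hUne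
  have hsum : |x ℓ0| - 6 * β ≤ |∑ ℓ, w ℓ * x ℓ| := by
    obtain ⟨S, hS, hSP⟩ := hProx ℓ0
    have hPS : ‖colAvg P S - _root_.col M ℓ0‖ ≤ 4 * β :=
      norm_colAvg_sub_le (Finset.card_pos.1 (hS ▸ hm0)) fun j hj => by
        simpa [hβ, mul_div_assoc] using hSP j hj
    have hPx : inner ℝ u (colAvg P R') = ∑ ℓ, w ℓ * x ℓ := by
      simp [← hwP, inner_sum, inner_smul_right, hx]
    linarith [hPx ▸ abs_inner_le_abs_inner_colAvg_add hAP hu.le hR'card hR'max hS hPS]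
  have hout : ∀ ℓ ∉ U, |x ℓ| ≤ 150 * (k : ℝ) ^ 4 * β / α := fun ℓ hℓ => by
    obtain ⟨t, rfl⟩ : ∃ t, ℓ = ℓidx t := by simpa [hU] using hℓ
    have h := abs_inner_le_abs_inner_add_norm_sub hu.le (_root_.col M (ℓidx t)) (colAvg A (R t))
    rw [huR t, abs_zero, zero_add, norm_sub_rev] at h
    exact h.trans (hc ▸ hclose t)
  have hgap : ∀ ℓ ∈ U, ∀ ℓ' ∈ U, ℓ ≠ ℓ' → 0.097 * α / (k : ℝ) ^ 4 * Mmax ≤ |x ℓ - x ℓ'| := by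
    intro ℓ hℓ ℓ' hℓ' hne
    simp only [hU, Finset.mem_filter, Finset.mem_univ, true_and] at hℓ hℓ'
    simpa [hx, inner_sub_right] using hui ℓ ℓ' hne hℓ hℓ'
  obtain ⟨i, hiU, hi⟩ :=
    exists_mem_one_sub_mul_min_le_of_le_abs_sum hw0 hw1 hUne hout hgap hℓ0max hsum
  refine ⟨i, (Finset.mem_filter.1 hiU).2, ?_⟩
  have hSB' : β ≤ α ^ 3 * Mmax / (4500 * (k : ℝ) ^ 9) :=
    hSB.trans (by gcongr; exact (ciInf_le (Set.finite_range _).bddBelow ℓ0).trans (hMle ℓ0))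
  calc ‖colAvg A R' - _root_.col M i‖ ≤ β + (1 - w i) * (2 * Mmax) :=
        (norm_sub_le_norm_sub_add_norm_sub _ (colAvg P R') _).trans
          (add_le_add (hAP R' hR'card) (hwP ▸ norm_sum_smul_sub_le hw0 hw1 hMle i))
    _ ≤ 150 * (k : ℝ) ^ 4 * β / α :=
        add_mul_le_of_mul_min_le (by exact_mod_cast hk) hα0 hα1 hβ0 hSB'
          (huii ℓ0 (Finset.mem_filter.1 hℓ0U).2) hi
    _ = 150 * (k : ℝ) ^ 4 * σ / (α * √δ) := hc.symm

theorem stmt13 {d n k r : ℕ} (hk : 2 ≤ k) (hrk : r ≤ k - 1)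
    (A P : Matrix (Fin d) (Fin n) ℝ) (M : Matrix (Fin d) (Fin k) ℝ)
    (σ : ℝ) (hσ : σ = specNorm (A - P) / Real.sqrt n)
    (α δ : ℝ) (hα : α ∈ Set.Ioo (0:ℝ) 1) (hδ0 : 0 < δ) (hδk : δ ≤ 1 / k)
    (m : ℕ) (hm0 : 0 < m) (hm : (m : ℝ) = δ * n)
    (hPK : ∀ j : Fin n, _root_.col P j ∈ convexHull ℝ (Set.range (_root_.col M)))
    (hWS : ∀ ℓ : Fin k, α * (⨆ ℓ' : Fin k, ‖_root_.col M ℓ'‖) ≤ projNullNorm M ℓ (_root_.col M ℓ))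
    (hSB : σ / Real.sqrt δ ≤ α ^ 3 * (⨅ ℓ : Fin k, ‖_root_.col M ℓ‖) / (4500 * (k : ℝ) ^ 9))
    (hProx : ∀ ℓ : Fin k, ∃ S : Finset (Fin n), S.card = m ∧
      ∀ j ∈ S, ‖_root_.col P j - _root_.col M ℓ‖ ≤ 4 * σ / Real.sqrt δ)
    (R : Fin r → Finset (Fin n)) (hRcard : ∀ t, (R t).card = m)
    (ℓidx : Fin r → Fin k) (hinj : Function.Injective ℓidx)
    (hclose : ∀ t, ‖colAvg A (R t) - _root_.col M (ℓidx t)‖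
      ≤ 150 * (k : ℝ) ^ 4 * σ / (α * Real.sqrt δ))
    (u : EuclideanSpace ℝ (Fin d)) (hu : ‖u‖ = 1)
    (huR : ∀ t, (inner ℝ u (colAvg A (R t)) : ℝ) = 0)
    (hui : ∀ ℓ ℓ' : Fin k, ℓ ≠ ℓ' → (∀ t, ℓ ≠ ℓidx t) → (∀ t, ℓ' ≠ ℓidx t) →
      (0.097 * α / (k : ℝ) ^ 4) * (⨆ ℓ'' : Fin k, ‖_root_.col M ℓ''‖)
        ≤ |(inner ℝ u (_root_.col M ℓ - _root_.col M ℓ') : ℝ)|)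
    (huii : ∀ ℓ : Fin k, (∀ t, ℓ ≠ ℓidx t) →
      (0.09989 * α / (k : ℝ) ^ 4) * (⨆ ℓ'' : Fin k, ‖_root_.col M ℓ''‖)
        ≤ |(inner ℝ u (_root_.col M ℓ) : ℝ)|)
    (R' : Finset (Fin n)) (hR'card : R'.card = m)
    (hR'max : ∀ T : Finset (Fin n), T.card = m →
      |(inner ℝ u (colAvg A T) : ℝ)| ≤ |(inner ℝ u (colAvg A R') : ℝ)|) :
    ∃ ℓ : Fin k, (∀ t, ℓ ≠ ℓidx t) ∧
      ‖colAvg A R' - _root_.col M ℓ‖ ≤ 150 * (k : ℝ) ^ 4 * σ / (α * Real.sqrt δ) :=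
  stmt13_general hk hrk A P M σ hσ α δ hα hδ0 m hm0 hm hPK hSB hProx R ℓidx hclose u hu huR hui huii
    R' hR'card hR'max
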